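/- Negation-reduction is confluent: if a →¬* b and a →¬* c then there exists d with b →¬* d and c →¬* d. -/

import Mathlib

/-- Expressions of the system d. -/
inductive Expr : Type
  | tau : Expr
  | var : ℕ → Expr
  | uabs : ℕ → Expr → Expr → Expr   -- [x:a]b
  | app : Expr → Expr → Expr        -- (a b)
  | eabs : ℕ → Expr → Expr → Expr   -- [x!a]b
  | pdef : ℕ → Expr → Expr → Expr → Expr -- [x ≐ a, b : c], binds x in c only
  | projL : Expr → Expr             -- a.1
  | projR : Expr → Expr             -- a.2
  | prod : Expr → Expr → Expr       -- [a,b]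
  | sum : Expr → Expr → Expr        -- [a+b]
  | injl : Expr → Expr → Expr       -- left injection
  | injr : Expr → Expr → Expr       -- right injection
  | case : Expr → Expr → Expr       -- [a|b]
  | neg : Expr → Expr               -- ¬a
deriving DecidableEq

namespace Expr

/-- Free variables. -/
def FV : Expr → Finset ℕ
  | tau => ∅
  | var x => {x}
  | uabs x a b => FV a ∪ (FV b \ {x})
  | app a b => FV a ∪ FV b
  | eabs x a b => FV a ∪ (FV b \ {x})
  | pdef x a b c => FV a ∪ FV b ∪ (FV c \ {x})
  | projL a => FV a
  | projR a => FV a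
  | prod a b => FV a ∪ FV b
  | sum a b => FV a ∪ FV b
  | injl a b => FV a ∪ FV b
  | injr a b => FV a ∪ FV b
  | case a b => FV a ∪ FV b
  | neg a => FV a

/-- Substitution of all free occurrences of a variable. -/
def subst : Expr → ℕ → Expr → Expr
  | tau, _, _ => tau
  | var y, x, b => if y = x then b else var y
  | uabs y a c, x, b =>
      if y = x then uabs y (subst a x b) c else uabs y (subst a x b) (subst c x b)
  | app a c, x, b => app (subst a x b) (subst c x b)
  | eabs y a c, x, b =>
      if y = x then eabs y (subst a x b) c else eabs y (subst a x b) (subst c x b)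
  | pdef y a c d, x, b =>
      if y = x then pdef y (subst a x b) (subst c x b) d
      else pdef y (subst a x b) (subst c x b) (subst d x b)
  | projL a, x, b => projL (subst a x b)
  | projR a, x, b => projR (subst a x b)
  | prod a c, x, b => prod (subst a x b) (subst c x b)
  | sum a c, x, b => sum (subst a x b) (subst c x b)
  | injl a c, x, b => injl (subst a x b) (subst c x b)
  | injr a c, x, b => injr (subst a x b) (subst c x b)
  | case a c, x, b => case (subst a x b) (subst c x b)
  | neg a, x, b => neg (subst a x b)

/-- Single-step reduction of system d. -/
inductive Step : Expr → Expr → Prop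
  | beta1 (x a b c) : Step (app (uabs x a b) c) (subst b x c)
  | beta2 (x a b c) : Step (app (eabs x a b) c) (subst b x c)
  | beta3 (a b c d) : Step (app (case a b) (injl c d)) (app a c)
  | beta4 (a b c d) : Step (app (case a b) (injr c d)) (app b d)
  | pi1 (x a b c) : Step (projL (pdef x a b c)) a
  | pi2 (x a b c) : Step (projR (pdef x a b c)) b
  | pi3 (a b) : Step (projL (prod a b)) a
  | pi4 (a b) : Step (projR (prod a b)) b
  | pi5 (a b) : Step (projL (sum a b)) a
  | pi6 (a b) : Step (projR (sum a b)) b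
  | nu1 (a) : Step (neg (neg a)) a
  | nu2 (a b) : Step (neg (prod a b)) (sum (neg a) (neg b))
  | nu3 (a b) : Step (neg (sum a b)) (prod (neg a) (neg b))
  | nu4 (x a b) : Step (neg (uabs x a b)) (eabs x a (neg b))
  | nu5 (x a b) : Step (neg (eabs x a b)) (uabs x a (neg b))
  | nu6 : Step (neg tau) tau
  | nu7 (x a b c) : Step (neg (pdef x a b c)) (pdef x a b c)
  | nu8 (a b) : Step (neg (injl a b)) (injl a b)
  | nu9 (a b) : Step (neg (injr a b)) (injr a b)
  | nu10 (a b) : Step (neg (case a b)) (case a b)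
  | uabsL {a b : Expr} (x) (c) : Step a b → Step (uabs x a c) (uabs x b c)
  | uabsR {a b : Expr} (x) (c) : Step a b → Step (uabs x c a) (uabs x c b)
  | appL {a b : Expr} (c) : Step a b → Step (app a c) (app b c)
  | appR {a b : Expr} (c) : Step a b → Step (app c a) (app c b)
  | eabsL {a b : Expr} (x) (c) : Step a b → Step (eabs x a c) (eabs x b c)
  | eabsR {a b : Expr} (x) (c) : Step a b → Step (eabs x c a) (eabs x c b)
  | pdef1 {a b : Expr} (x) (c d) : Step a b → Step (pdef x a c d) (pdef x b c d)
  | pdef2 {a b : Expr} (x) (c d) : Step a b → Step (pdef x c a d) (pdef x c b d)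
  | pdef3 {a b : Expr} (x) (c d) : Step a b → Step (pdef x c d a) (pdef x c d b)
  | projL1 {a b : Expr} : Step a b → Step (projL a) (projL b)
  | projR1 {a b : Expr} : Step a b → Step (projR a) (projR b)
  | prodL {a b : Expr} (c) : Step a b → Step (prod a c) (prod b c)
  | prodR {a b : Expr} (c) : Step a b → Step (prod c a) (prod c b)
  | sumL {a b : Expr} (c) : Step a b → Step (sum a c) (sum b c)
  | sumR {a b : Expr} (c) : Step a b → Step (sum c a) (sum c b)
  | injlL {a b : Expr} (c) : Step a b → Step (injl a c) (injl b c)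
  | injlR {a b : Expr} (c) : Step a b → Step (injl c a) (injl c b)
  | injrL {a b : Expr} (c) : Step a b → Step (injr a c) (injr b c)
  | injrR {a b : Expr} (c) : Step a b → Step (injr c a) (injr c b)
  | caseL {a b : Expr} (c) : Step a b → Step (case a c) (case b c)
  | caseR {a b : Expr} (c) : Step a b → Step (case c a) (case c b)
  | negC {a b : Expr} : Step a b → Step (neg a) (neg b)

/-- Reduction: reflexive-transitive closure of single-step reduction. -/
def Red : Expr → Expr → Prop := Relation.ReflTransGen Step

/-- Congruence =λ : the symmetric and transitive (and reflexive) closure of reduction. -/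
def Conv : Expr → Expr → Prop := Relation.EqvGen Step

/-- Single-step negation-reduction. -/
inductive NegStep : Expr → Expr → Prop
  | nu1 (a) : NegStep (neg (neg a)) a
  | nu2 (a b) : NegStep (neg (prod a b)) (sum (neg a) (neg b))
  | nu3 (a b) : NegStep (neg (sum a b)) (prod (neg a) (neg b))
  | nu4 (x a b) : NegStep (neg (uabs x a b)) (eabs x a (neg b))
  | nu5 (x a b) : NegStep (neg (eabs x a b)) (uabs x a (neg b))
  | prodL {a b : Expr} (c) : NegStep a b → NegStep (prod a c) (prod b c)
  | prodR {a b : Expr} (c) : NegStep a b → NegStep (prod c a) (prod c b)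
  | sumL {a b : Expr} (c) : NegStep a b → NegStep (sum a c) (sum b c)
  | sumR {a b : Expr} (c) : NegStep a b → NegStep (sum c a) (sum c b)
  | uabsBody {a b : Expr} (x) (c) : NegStep a b → NegStep (uabs x c a) (uabs x c b)
  | eabsBody {a b : Expr} (x) (c) : NegStep a b → NegStep (eabs x c a) (eabs x c b)
  | negC {a b : Expr} : NegStep a b → NegStep (neg a) (neg b)

/-- Negation-reduction: reflexive-transitive closure. -/
def NegRed : Expr → Expr → Prop := Relation.ReflTransGen NegStep

end Expr

open Expr

/-- Contexts: lists of declarations, most recent first. -/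
abbrev Ctx := List (ℕ × Expr)

/-- Domain of a context. -/
def Ctx.dom (Γ : Ctx) : List ℕ := Γ.map Prod.fst

/-- Substitution applied to all types declared in a context. -/
def Ctx.subst (Γ : Ctx) (x : ℕ) (b : Expr) : Ctx :=
  Γ.map (fun p => (p.1, Expr.subst p.2 x b))

/-- The typing relation of system d. -/
inductive Typing : Ctx → Expr → Expr → Prop
  | ax : Typing [] .tau .tau
  | start {Γ a b} (x) : Typing Γ a b → x ∉ Ctx.dom Γ →
      Typing ((x, a) :: Γ) (.var x) a
  | weak {Γ a b c d} (x) : Typing Γ a b → Typing Γ c d → x ∉ Ctx.dom Γ →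
      Typing ((x, c) :: Γ) a b
  | conv {Γ a b c d} : Typing Γ a b → Conv b c → Typing Γ c d → Typing Γ a c
  | absU {Γ a b c} (x) : Typing ((x, a) :: Γ) b c →
      Typing Γ (.uabs x a b) (.uabs x a c)
  | absE {Γ a b c} (x) : Typing ((x, a) :: Γ) b c →
      Typing Γ (.eabs x a b) (.uabs x a c)
  | appl {Γ a b c d} (x) : Typing Γ a (.uabs x b c) → Typing Γ d b →
      Typing Γ (.app a d) (Expr.subst c x d)
  | pdef {Γ a b c d e} (x) : Typing Γ a b → Typing Γ c (Expr.subst d x a) →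
      Typing ((x, b) :: Γ) d e → Typing Γ (.pdef x a c d) (.eabs x b d)
  | chI {Γ a b c} (x) : Typing Γ a (.eabs x b c) → Typing Γ (.projL a) b
  | chB {Γ a b c} (x) : Typing Γ a (.eabs x b c) →
      Typing Γ (.projR a) (Expr.subst c x (.projL a))
  | prd {Γ a b c d} : Typing Γ a c → Typing Γ b d →
      Typing Γ (.prod a b) (.prod c d)
  | sum {Γ a b c d} : Typing Γ a c → Typing Γ b d →
      Typing Γ (.sum a b) (.prod c d)
  | prL {Γ a b c} : Typing Γ a (.prod b c) → Typing Γ (.projL a) b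
  | prR {Γ a b c} : Typing Γ a (.prod b c) → Typing Γ (.projR a) c
  | injL {Γ a b c d} : Typing Γ a b → Typing Γ c d →
      Typing Γ (.injl a c) (.sum b c)
  | injR {Γ a b c d} : Typing Γ a b → Typing Γ c d →
      Typing Γ (.injr c a) (.sum c b)
  | case {Γ a b c₁ c₂ d e} (x y z) : Typing Γ a (.uabs x c₁ d) →
      Typing Γ b (.uabs y c₂ d) → Typing Γ d e → z ∉ FV d →
      Typing Γ (.case a b) (.uabs z (.sum c₁ c₂) d)
  | neg {Γ a b} : Typing Γ a b → Typing Γ (.neg a) b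

/-- Validity: an expression is valid under a context iff it has a type. -/
def Valid (Γ : Ctx) (a : Expr) : Prop := ∃ b, Typing Γ a b

/-- The norming relation: `Norming Γ a n` holds iff the partial norming function
ν_Γ(a) is defined with value the norm `n` (norms are built from τ and products). -/
inductive Norming : Ctx → Expr → Expr → Prop
  | tau (Γ) : Norming Γ .tau .tau
  | varHead {Γ b n} (x) : Norming Γ b n → Norming ((x, b) :: Γ) (.var x) n
  | varTail {Γ b n} (x y) : x ≠ y → Norming Γ (.var x) n →
      Norming ((y, b) :: Γ) (.var x) n
  | uabs {Γ a b na nb} (x) : Norming Γ a na → Norming ((x, a) :: Γ) b nb →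
      Norming Γ (.uabs x a b) (.prod na nb)
  | eabs {Γ a b na nb} (x) : Norming Γ a na → Norming ((x, a) :: Γ) b nb →
      Norming Γ (.eabs x a b) (.prod na nb)
  | app {Γ a b nb nc} : Norming Γ a (.prod nb nc) → Norming Γ b nb →
      Norming Γ (.app a b) nc
  | pdef {Γ a b c na nb} (x) : Norming Γ a na → Norming Γ b nb →
      Norming ((x, a) :: Γ) c nb → Norming Γ (.pdef x a b c) (.prod na nb)
  | prod {Γ a b na nb} : Norming Γ a na → Norming Γ b nb →
      Norming Γ (.prod a b) (.prod na nb)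
  | sum {Γ a b na nb} : Norming Γ a na → Norming Γ b nb →
      Norming Γ (.sum a b) (.prod na nb)
  | injl {Γ a b na nb} : Norming Γ a na → Norming Γ b nb →
      Norming Γ (.injl a b) (.prod na nb)
  | injr {Γ a b na nb} : Norming Γ a na → Norming Γ b nb →
      Norming Γ (.injr a b) (.prod na nb)
  | projL {Γ a na nb} : Norming Γ a (.prod na nb) → Norming Γ (.projL a) na
  | projR {Γ a na nb} : Norming Γ a (.prod na nb) → Norming Γ (.projR a) nb
  | case {Γ a b na nb nc} : Norming Γ a (.prod na nc) → Norming Γ b (.prod nb nc) →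
      Norming Γ (.case a b) (.prod (.prod na nb) nc)
  | neg {Γ a n} : Norming Γ a n → Norming Γ (.neg a) n

/-- Normability: ν_Γ(a) is defined. -/
def Normable (Γ : Ctx) (a : Expr) : Prop := ∃ n, Norming Γ a n

/-!
A weight that doubles under `¬` strictly decreases along every negation step, so negation-reduction
terminates. The only overlaps are a root step on `¬t` against a step inside `t`; pushing the
negation inward commutes with that inner step up to a few further steps, so the reduction is
locally confluent, and Newman's lemma gives confluence.
-/

namespace Relation

theorem newman {α : Type*} {r : α → α → Prop} (hwf : WellFounded (flip r))
    (hlc : ∀ {a b c}, r a b → r a c → Join (ReflTransGen r) b c)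
    {a b c : α} (hb : ReflTransGen r a b) (hc : ReflTransGen r a c) :
    Join (ReflTransGen r) b c := by
  induction a using hwf.induction generalizing b c with
  | _ a ih =>
    rcases hb.cases_head with rfl | ⟨b₁, hab₁, hb₁b⟩
    · exact ⟨c, hc, .refl⟩
    rcases hc.cases_head with rfl | ⟨c₁, hac₁, hc₁c⟩
    · exact ⟨b, .refl, hb⟩
    obtain ⟨e, hb₁e, hc₁e⟩ := hlc hab₁ hac₁
    obtain ⟨f, hbf, hef⟩ := ih b₁ hab₁ hb₁b hb₁e
    obtain ⟨g, hfg, hcg⟩ := ih c₁ hac₁ (hc₁e.trans hef) hc₁c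
    exact ⟨g, hbf.trans hfg, hcg⟩

end Relation

namespace Expr

open Relation

def weight : Expr → ℕ
  | tau => 1
  | var _ => 1
  | uabs _ a b => weight a + weight b + 1
  | app a b => weight a + weight b + 1
  | eabs _ a b => weight a + weight b + 1
  | pdef _ a b c => weight a + weight b + weight c + 1
  | projL a => weight a + 1
  | projR a => weight a + 1
  | prod a b => weight a + weight b + 1
  | sum a b => weight a + weight b + 1
  | injl a b => weight a + weight b + 1
  | injr a b => weight a + weight b + 1
  | case a b => weight a + weight b + 1
  | neg a => 2 * weight a

theorem one_le_weight (a : Expr) : 1 ≤ weight a := by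
  induction a <;> simp only [weight] <;> omega

theorem NegStep.weight_lt {a b : Expr} (h : NegStep a b) : weight b < weight a := by
  induction h with
  | nu1 a => have := one_le_weight a; simp only [weight]; omega
  | _ => simp only [weight]; omega

theorem wellFounded_flip_negStep : WellFounded (flip NegStep) :=
  Subrelation.wf (fun h => NegStep.weight_lt h) (measure weight).wf

theorem NegRed.map (f : Expr → Expr) (hf : ∀ {a b}, NegStep a b → NegStep (f a) (f b))
    {a b : Expr} (h : NegRed a b) : NegRed (f a) (f b) :=
  h.lift f (fun _ _ => hf)

theorem join_negRed_map (f : Expr → Expr) (hf : ∀ {a b}, NegStep a b → NegStep (f a) (f b))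
    {a b : Expr} (h : Join NegRed a b) : Join NegRed (f a) (f b) :=
  let ⟨d, had, hbd⟩ := h
  ⟨f d, NegRed.map f hf had, NegRed.map f hf hbd⟩

/-- The result of the root negation step on `¬a`; the fallback `¬a` is never reached, since only
these five shapes of `a` admit such a step. -/
def pushNeg : Expr → Expr
  | neg a => a
  | prod a b => sum (neg a) (neg b)
  | sum a b => prod (neg a) (neg b)
  | uabs x a b => eabs x a (neg b)
  | eabs x a b => uabs x a (neg b)
  | a => neg a

theorem NegStep.join_neg_pushNeg {a b : Expr} (h : NegStep a b) :
    Join NegRed (neg b) (pushNeg a) := by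
  have step {a b : Expr} (h : NegStep a b) : NegRed a b := .single h
  cases h with
  | nu1 => exact ⟨_, .refl, .refl⟩
  | nu2 =>
    refine ⟨_, (step (.nu3 _ _)).trans ?_, .refl⟩
    exact (step (.prodL _ (.nu1 _))).trans (step (.prodR _ (.nu1 _)))
  | nu3 =>
    refine ⟨_, (step (.nu2 _ _)).trans ?_, .refl⟩
    exact (step (.sumL _ (.nu1 _))).trans (step (.sumR _ (.nu1 _)))
  | nu4 =>
    exact ⟨_, (step (.nu5 _ _ _)).trans (step (.uabsBody _ _ (.nu1 _))), .refl⟩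
  | nu5 =>
    exact ⟨_, (step (.nu4 _ _ _)).trans (step (.eabsBody _ _ (.nu1 _))), .refl⟩
  | prodL _ h => exact ⟨_, step (.nu2 _ _), step (.sumL _ (.negC h))⟩
  | prodR _ h => exact ⟨_, step (.nu2 _ _), step (.sumR _ (.negC h))⟩
  | sumL _ h => exact ⟨_, step (.nu3 _ _), step (.prodL _ (.negC h))⟩
  | sumR _ h => exact ⟨_, step (.nu3 _ _), step (.prodR _ (.negC h))⟩
  | uabsBody _ _ h => exact ⟨_, step (.nu4 _ _ _), step (.eabsBody _ _ (.negC h))⟩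
  | eabsBody _ _ h => exact ⟨_, step (.nu5 _ _ _), step (.uabsBody _ _ (.negC h))⟩
  | negC h => exact ⟨_, step (.nu1 _), step h⟩

theorem join_negRed_of_negStep {a b c : Expr} (hb : NegStep a b) (hc : NegStep a c) :
    Join NegRed b c := by
  have step {a b : Expr} (h : NegStep a b) : NegRed a b := .single h
  induction hb generalizing c with
  | negC h ih =>
    cases hc with
    | negC h' => exact join_negRed_map neg (.negC ·) (ih h')
    | _ => exact h.join_neg_pushNeg
  | prodL v h ih =>
    cases hc with
    | prodL _ h' => exact join_negRed_map (prod · v) (.prodL v) (ih h')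
    | prodR _ h' => exact ⟨_, step (.prodR _ h'), step (.prodL _ h)⟩
  | prodR v h ih =>
    cases hc with
    | prodR _ h' => exact join_negRed_map (prod v ·) (.prodR v) (ih h')
    | prodL _ h' => exact ⟨_, step (.prodL _ h'), step (.prodR _ h)⟩
  | sumL v h ih =>
    cases hc with
    | sumL _ h' => exact join_negRed_map (sum · v) (.sumL v) (ih h')
    | sumR _ h' => exact ⟨_, step (.sumR _ h'), step (.sumL _ h)⟩
  | sumR v h ih =>
    cases hc with
    | sumR _ h' => exact join_negRed_map (sum v ·) (.sumR v) (ih h')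
    | sumL _ h' => exact ⟨_, step (.sumL _ h'), step (.sumR _ h)⟩
  | uabsBody x v h ih =>
    cases hc with
    | uabsBody _ _ h' => exact join_negRed_map (uabs x v ·) (.uabsBody x v) (ih h')
  | eabsBody x v h ih =>
    cases hc with
    | eabsBody _ _ h' => exact join_negRed_map (eabs x v ·) (.eabsBody x v) (ih h')
  | _ =>
    cases hc with
    | negC h' => exact symm h'.join_neg_pushNeg
    | _ => exact ⟨_, .refl, .refl⟩

end Expr

theorem stmt_5 (a b c : Expr) (hb : Expr.NegRed a b) (hc : Expr.NegRed a c) :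
    ∃ d, Expr.NegRed b d ∧ Expr.NegRed c d :=
  Relation.newman Expr.wellFounded_flip_negStep Expr.join_negRed_of_negStep hb hc
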